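/- Let l : ℕ → ℕ be strictly increasing and let Q ⊆ 2^ω be a nonempty closed set with the l-branching property. Then there exists an l-branching skeletal tree T with [T] ⊆ Q; in particular the class 𝒯(Q) of l-branching skeletal trees all of whose paths lie in Q is nonempty. -/
import Mathlib


open scoped ENNReal

/-- The length-`n` prefix of a point of Cantor space `2^ω = ℕ → Bool`, as a binary string. -/
def pre (x : ℕ → Bool) (n : ℕ) : List Bool := (List.range n).map x

/-- `σ` is a (finite) prefix of `x ∈ 2^ω`. -/
def PrefOf (σ : List Bool) (x : ℕ → Bool) : Prop := pre x σ.length = σ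

/-- The cylinder `[σ] = {x ∈ 2^ω : σ ⪯ x}`. -/
def cyl (σ : List Bool) : Set (ℕ → Bool) := {x | PrefOf σ x}

/-- `[V] = ⋃_{σ ∈ V} [σ]`. -/
def cylSet (V : Set (List Bool)) : Set (ℕ → Bool) := ⋃ σ ∈ V, cyl σ

/-- A tree: a set of binary strings closed under prefixes. -/
def IsTree (T : Set (List Bool)) : Prop := ∀ σ ∈ T, ∀ τ : List Bool, τ <+: σ → τ ∈ T

/-- A pruned tree: every node has a proper extension in the tree. -/
def Pruned (T : Set (List Bool)) : Prop := ∀ σ ∈ T, ∃ τ ∈ T, σ <+: τ ∧ σ ≠ τ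

/-- The set `[T]` of paths of a tree `T`. -/
def paths (T : Set (List Bool)) : Set (ℕ → Bool) := {x | ∀ n, pre x n ∈ T}

/-- The fair-coin (uniform) product measure on Cantor space, characterized by its
values `μ [σ] = 2^{-|σ|}` on cylinders (this determines `μ` uniquely). -/
def IsFairCoin (μ : MeasureTheory.Measure (ℕ → Bool)) : Prop :=
  ∀ σ : List Bool, μ (cyl σ) = 2⁻¹ ^ σ.length

/-- A closed set `Q ⊆ 2^ω` has the `l`-branching property: for every `i`, every string
of length `l i` whose cylinder meets `Q` has at least two extensions of length
`l (i+1)` whose cylinders meet `Q`. -/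
def LBranchingProp (l : ℕ → ℕ) (Q : Set (ℕ → Bool)) : Prop :=
  ∀ i : ℕ, ∀ σ : List Bool, σ.length = l i → (cyl σ ∩ Q).Nonempty →
    ∃ τ₁ τ₂ : List Bool, σ <+: τ₁ ∧ σ <+: τ₂ ∧ τ₁.length = l (i + 1) ∧
      τ₂.length = l (i + 1) ∧ τ₁ ≠ τ₂ ∧ (cyl τ₁ ∩ Q).Nonempty ∧ (cyl τ₂ ∩ Q).Nonempty

/-- Two strings are incomparable: neither is a prefix of the other. -/
def Incomparable (τ₁ τ₂ : List Bool) : Prop := ¬τ₁ <+: τ₂ ∧ ¬τ₂ <+: τ₁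

/-- `σ` branches in `T`: it has at least two incomparable extensions in `T`. -/
def Branches (T : Set (List Bool)) (σ : List Bool) : Prop :=
  ∃ τ₁ ∈ T, ∃ τ₂ ∈ T, σ <+: τ₁ ∧ σ <+: τ₂ ∧ Incomparable τ₁ τ₂

/-- `T` is skeletal with main branch `z`: `z ∈ [T]` and a node of `T` branches in `T`
iff it is a prefix of `z`. -/
def SkeletalWithBranch (T : Set (List Bool)) (z : ℕ → Bool) : Prop :=
  z ∈ paths T ∧ ∀ σ ∈ T, (Branches T σ ↔ PrefOf σ z)

/-- A skeletal tree `T` with main branch `z` is `l`-branching: for every `i`, the prefix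
of `z` of length `l i` has at least two incomparable extensions in `T` of length at
most `l (i+1)`. -/
def LBranchingSkel (l : ℕ → ℕ) (T : Set (List Bool)) (z : ℕ → Bool) : Prop :=
  ∀ i : ℕ, ∃ τ₁ ∈ T, ∃ τ₂ ∈ T, pre z (l i) <+: τ₁ ∧ pre z (l i) <+: τ₂ ∧
    τ₁.length ≤ l (i + 1) ∧ τ₂.length ≤ l (i + 1) ∧ Incomparable τ₁ τ₂

lemma pre_length (x : ℕ → Bool) (n : ℕ) : (pre x n).length = n := by simp [pre]

lemma prefOf_pre (x : ℕ → Bool) (n : ℕ) : PrefOf (pre x n) x := by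
  simp [PrefOf, pre_length]

lemma pre_eq_pre_iff {x y : ℕ → Bool} {n : ℕ} :
    pre x n = pre y n ↔ ∀ k < n, x k = y k := by
  constructor
  · intro h k hk
    have := congrArg (fun L => L[k]?) h
    simpa [pre, List.getElem?_map, List.getElem?_range, hk] using this
  · intro h
    apply List.ext_getElem (by simp [pre_length])
    intro k h1 h2
    simp only [pre, List.getElem_map, List.getElem_range]
    exact h k (by simpa [pre_length] using h1)

lemma pre_prefix_pre (x : ℕ → Bool) {m n : ℕ} (h : m ≤ n) : pre x m <+: pre x n := by
  have : pre x m = (pre x n).take m := by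
    simp [pre, ← List.map_take, List.take_range, Nat.min_eq_left h]
  rw [this]; exact List.take_prefix _ _

lemma eq_pre_of_prefix {x : ℕ → Bool} {τ : List Bool} {n : ℕ} (h : τ <+: pre x n) :
    τ = pre x τ.length := by
  have hlen : τ.length ≤ n := by simpa [pre_length] using h.length_le
  have h2 : pre x τ.length <+: pre x n := pre_prefix_pre x hlen
  have := List.prefix_of_prefix_length_le h h2 (by simp [pre_length])
  exact this.eq_of_length (by simp [pre_length])

lemma prefOf_of_prefix {σ τ : List Bool} {x : ℕ → Bool} (h : τ <+: σ) (hσ : PrefOf σ x) :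
    PrefOf τ x := by
  have : τ <+: pre x σ.length := by rw [hσ]; exact h
  exact (eq_pre_of_prefix this).symm

lemma incomp_of_ne {τ₁ τ₂ : List Bool} (hlen : τ₁.length = τ₂.length) (hne : τ₁ ≠ τ₂) :
    Incomparable τ₁ τ₂ := by
  constructor
  · intro h; exact hne (h.eq_of_length hlen)
  · intro h; exact hne (h.eq_of_length hlen.symm).symm

lemma prefix_pre {σ : List Bool} {x : ℕ → Bool} {n : ℕ} (h : PrefOf σ x)
    (hn : σ.length ≤ n) : σ <+: pre x n := by
  have h2 := pre_prefix_pre x hn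
  rwa [show pre x σ.length = σ from h] at h2

/-- If `Q` is a nonempty closed set with the `l`-branching property,
then there is an `l`-branching skeletal tree `T` with `[T] ⊆ Q`; in particular, the
class `𝒯(Q)` of such trees is nonempty. -/
theorem stmt_5 (l : ℕ → ℕ) (hl : StrictMono l) (Q : Set (ℕ → Bool))
    (hQne : Q.Nonempty) (hQcl : IsClosed Q) (hQbr : LBranchingProp l Q) :
    ∃ T : Set (List Bool), ∃ z : ℕ → Bool, IsTree T ∧ Pruned T ∧
      SkeletalWithBranch T z ∧ LBranchingSkel l T z ∧ paths T ⊆ Q := by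
  obtain ⟨z, hz⟩ := hQne
  -- for each i, pick a side branch point y i ∈ Q
  have key : ∀ i : ℕ, ∃ y : ℕ → Bool, y ∈ Q ∧ pre y (l i) = pre z (l i) ∧
      pre y (l (i+1)) ≠ pre z (l (i+1)) := by
    intro i
    obtain ⟨τ₁, τ₂, h1, h2, hlen1, hlen2, hne, hQ1, hQ2⟩ :=
      hQbr i (pre z (l i)) (pre_length _ _) ⟨z, prefOf_pre z _, hz⟩
    have hpick : ∃ τ : List Bool, pre z (l i) <+: τ ∧ τ.length = l (i+1) ∧
        τ ≠ pre z (l (i+1)) ∧ (cyl τ ∩ Q).Nonempty := by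
      by_cases hτ1 : τ₁ = pre z (l (i+1))
      · exact ⟨τ₂, h2, hlen2, by rw [← hτ1]; exact fun h => hne h.symm, hQ2⟩
      · exact ⟨τ₁, h1, hlen1, hτ1, hQ1⟩
    obtain ⟨τ, hext, hlen, hneq, ⟨w, hw1, hw2⟩⟩ := hpick
    have hwτ : pre w (l (i+1)) = τ := by
      have h := (show pre w τ.length = τ from hw1)
      rwa [hlen] at h
    refine ⟨w, hw2, ?_, by rw [hwτ]; exact hneq⟩
    have : pre z (l i) <+: pre w (l (i+1)) := by rw [hwτ]; exact hext
    have := eq_pre_of_prefix this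
    rw [pre_length] at this
    exact this.symm
  choose y hyQ hyagree hydiv using key
  -- divergence point of y i from z in [l i, l (i+1))
  have hdiv : ∀ i, ∃ p, l i ≤ p ∧ p < l (i+1) ∧ y i p ≠ z p := by
    intro i
    by_contra h
    push_neg at h
    apply hydiv i
    rw [pre_eq_pre_iff]
    intro k hk
    by_cases hki : k < l i
    · exact pre_eq_pre_iff.mp (hyagree i) k hki
    · by_contra hne
      exact hne (h k (le_of_not_gt hki) hk)
  -- the tree
  set T : Set (List Bool) := {σ | PrefOf σ z ∨ ∃ i, PrefOf σ (y i)} with hT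
  -- uniqueness of the side branch through a non-main node
  have uniq : ∀ i j σ, PrefOf σ (y i) → PrefOf σ (y j) → ¬ PrefOf σ z → i = j := by
    have aux : ∀ i j σ, i < j → PrefOf σ (y i) → PrefOf σ (y j) → ¬ PrefOf σ z → False := by
      intro i j σ hij hi hj hzσ
      -- divergence of σ from z
      have hdivσ : ∃ p < σ.length, z p ≠ y j p := by
        by_contra h
        push_neg at h
        exact hzσ ((pre_eq_pre_iff.mpr h).trans hj)
      obtain ⟨p, hp, hpz⟩ := hdivσ
      -- y j agrees with z below l j, so p ≥ l j
      have hplj : l j ≤ p := by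
        by_contra h
        exact hpz ((pre_eq_pre_iff.mp (hyagree j) p (lt_of_not_ge h)).symm)
      obtain ⟨q, hq1, hq2, hq3⟩ := hdiv i
      have hqlj : q < l j := lt_of_lt_of_le hq2 (hl.monotone hij)
      have hqσ : q < σ.length := lt_of_lt_of_le hqlj (le_trans hplj (le_of_lt hp))
      -- σ prefix of y i and y j → y i q = y j q
      have hij' : y i q = y j q := by
        have : pre (y i) σ.length = pre (y j) σ.length := by rw [hi, hj]
        exact pre_eq_pre_iff.mp this q hqσ
      have : y j q = z q := pre_eq_pre_iff.mp (hyagree j) q hqlj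
      exact hq3 (hij'.trans this)
    intro i j σ hi hj hzσ
    rcases lt_trichotomy i j with h | h | h
    · exact absurd (aux i j σ h hi hj hzσ) id
    · exact h
    · exact absurd (aux j i σ h hj hi hzσ) id
  -- membership helpers
  have memz : ∀ n, pre z n ∈ T := fun n => Or.inl (prefOf_pre z n)
  have memy : ∀ i n, pre (y i) n ∈ T := fun i n => Or.inr ⟨i, prefOf_pre (y i) n⟩
  have htree : IsTree T := by
    intro σ hσ τ hτ
    rcases hσ with h | ⟨i, h⟩
    · exact Or.inl (prefOf_of_prefix hτ h)
    · exact Or.inr ⟨i, prefOf_of_prefix hτ h⟩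
  -- pre z n = pre (y i) n for n ≤ l i
  have agree : ∀ i n, n ≤ l i → pre z n = pre (y i) n := by
    intro i n hn
    rw [pre_eq_pre_iff]
    intro k hk
    exact (pre_eq_pre_iff.mp (hyagree i) k (lt_of_lt_of_le hk hn)).symm
  refine ⟨T, z, htree, ?_, ⟨fun n => memz n, ?_⟩, ?_, ?_⟩
  · -- Pruned
    intro σ hσ
    rcases hσ with h | ⟨i, h⟩
    · refine ⟨pre z (σ.length + 1), memz _, prefix_pre h (Nat.le_succ _), ?_⟩
      · intro heq
        have := congrArg List.length heq
        rw [pre_length] at this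
        omega
    · refine ⟨pre (y i) (σ.length + 1), memy _ _, prefix_pre h (Nat.le_succ _), ?_⟩
      · intro heq
        have := congrArg List.length heq
        rw [pre_length] at this
        omega
  · -- branching characterization
    intro σ hσ
    constructor
    · -- branches → prefix of z
      intro hbr
      by_contra hσz
      obtain ⟨i, hσi⟩ : ∃ i, PrefOf σ (y i) := by
        rcases hσ with h | h
        · exact absurd h hσz
        · exact h
      obtain ⟨τ₁, hτ₁T, τ₂, hτ₂T, hστ₁, hστ₂, hinc⟩ := hbr
      have hto : ∀ τ, τ ∈ T → σ <+: τ → τ = pre (y i) τ.length := by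
        intro τ hτT hστ
        rcases hτT with h | ⟨j, h⟩
        · exact absurd (prefOf_of_prefix hστ h) hσz
        · have hσj : PrefOf σ (y j) := prefOf_of_prefix hστ h
          have hji : j = i := uniq j i σ hσj hσi hσz
          rw [← hji]
          exact h.symm
      have h1 := hto τ₁ hτ₁T hστ₁
      have h2 := hto τ₂ hτ₂T hστ₂
      rcases le_total τ₁.length τ₂.length with hle | hle
      · exact hinc.1 (by rw [h1, h2]; exact pre_prefix_pre _ hle)
      · exact hinc.2 (by rw [h1, h2]; exact pre_prefix_pre _ hle)
    · -- prefix of z → branches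
      intro hσz
      set n := σ.length with hn
      have hσ' : σ = pre z n := hσz.symm
      have hnl : n ≤ l n := hl.le_apply
      have hσy : PrefOf σ (y n) := (agree n n hnl).symm.trans hσz
      refine ⟨pre z (l (n+1)), memz _, pre (y n) (l (n+1)), memy _ _, ?_, ?_, ?_⟩
      · exact prefix_pre hσz (le_trans hnl (hl.monotone (Nat.le_succ n)))
      · exact prefix_pre hσy (le_trans hnl (hl.monotone (Nat.le_succ n)))
      · exact incomp_of_ne (by rw [pre_length, pre_length])
          (fun h => hydiv n h.symm)
  · -- LBranchingSkel
    intro i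
    refine ⟨pre z (l (i+1)), memz _, pre (y i) (l (i+1)), memy _ _, ?_, ?_, ?_, ?_, ?_⟩
    · exact pre_prefix_pre z (hl.monotone (Nat.le_succ i))
    · rw [agree i (l i) le_rfl]
      exact pre_prefix_pre (y i) (hl.monotone (Nat.le_succ i))
    · rw [pre_length]
    · rw [pre_length]
    · exact incomp_of_ne (by rw [pre_length, pre_length]) (fun h => hydiv i h.symm)
  · -- paths ⊆ Q
    intro x hx
    by_cases hxz : x = z
    · rw [hxz]; exact hz
    · have : ∃ p, x p ≠ z p := by
        by_contra h
        push_neg at h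
        exact hxz (funext h)
      obtain ⟨p, hp⟩ := this
      set n₀ := p + 1 with hn₀
      have hnotz : ∀ n, p < n → ¬ PrefOf (pre x n) z := by
        intro n hpn h
        unfold PrefOf at h
        rw [pre_length] at h
        exact hp (pre_eq_pre_iff.mp h.symm p hpn)
      have hsome : ∀ n, p < n → ∃ i, PrefOf (pre x n) (y i) := by
        intro n hpn
        rcases hx n with h | h
        · exact absurd h (hnotz n hpn)
        · exact h
      obtain ⟨i₀, hi₀⟩ := hsome n₀ (Nat.lt_succ_self p)
      have hall : ∀ k, x k = y i₀ k := by
        intro k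
        set n := max n₀ (k+1) with hnd
        obtain ⟨i, hi⟩ := hsome n (lt_of_lt_of_le (Nat.lt_succ_self p) (le_max_left _ _))
        have hpre : pre x n₀ <+: pre x n := pre_prefix_pre x (le_max_left _ _)
        have hi' : PrefOf (pre x n₀) (y i) := prefOf_of_prefix hpre hi
        have : i = i₀ := uniq i i₀ (pre x n₀) hi' hi₀ (hnotz n₀ (Nat.lt_succ_self p))
        rw [this] at hi
        have : pre (y i₀) n = pre x n := by
          have := hi; unfold PrefOf at this; rwa [pre_length] at this
        exact (pre_eq_pre_iff.mp this k (lt_of_lt_of_le (Nat.lt_succ_self k) (le_max_right _ _))).symm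
      rw [funext hall]
      exact hyQ i₀
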